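/- Let Z : [0,∞) → M(ℝ) be a map into the finite Borel measures on ℝ that is continuous for the weak topology (i.e. t ↦ ∫ f dZ(t) is continuous for every bounded continuous f : ℝ → ℝ). If the real-valued function t ↦ Z(t)*(ℝ) is continuous on [0,∞), then Z is continuous for the weak atomic topology; that is, for every t₀ ≥ 0 and every sequence t_n → t₀ one has Z(t_n) → Z(t₀) weakly and sup_{0<ε≤1} |I_ε(Z(t_n)) − I_ε(Z(t₀))| → 0. -/

import Mathlib

/-!
`I_ε(μ)` is the integral of the bounded continuous kernel `Φ(|x - y| / ε)` against `μ ⊗ μ`, and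
weak convergence passes to products, so `I_ε(μₙ) → I_ε(μ)` for every fixed `ε`. As `ε ↓ 0` the
kernel decreases to the indicator of the diagonal, whose `μ ⊗ μ`-mass is `μ*(ℝ)`. Hence
`ε ↦ I_ε(μ)`, extended by `μ*(ℝ)` at `ε = 0`, is monotone and continuous on `[0, 1]`, and the
continuity of `t ↦ Z(t)*(ℝ)` gives convergence at `ε = 0` as well. Pointwise convergence of
monotone functions to a continuous limit on a compact interval is uniform (Pólya).
-/

open MeasureTheory Filter Topology
open scoped NNReal

/-- Weak convergence of a sequence of finite Borel measures on `ℝ`: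
`∫ f dμₙ → ∫ f dμ` for every bounded continuous `f : ℝ → ℝ`. -/
def WeakTendsto (μs : ℕ → Measure ℝ) (μ : Measure ℝ) : Prop :=
  ∀ f : ℝ → ℝ, Continuous f → (∃ C, ∀ x, |f x| ≤ C) →
    Tendsto (fun n => ∫ x, f x ∂(μs n)) atTop (𝓝 (∫ x, f x ∂μ))

/-- The purely atomic measure `μ* = Σ_x μ({x})² δ_x`. -/
noncomputable def starMeasure (μ : Measure ℝ) : Measure ℝ :=
  Measure.sum (fun x : ℝ => (μ {x}) ^ 2 • Measure.dirac x)

/-- `I_ε(μ) = ∫∫ Φ(|x−y|/ε) μ(dx) μ(dy)` with `Φ(r) = max (1 − r) 0`. -/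
noncomputable def Ieps (ε : ℝ) (μ : Measure ℝ) : ℝ :=
  ∫ p : ℝ × ℝ, max (1 - |p.1 - p.2| / ε) 0 ∂(μ.prod μ)

open scoped BoundedContinuousFunction

namespace MeasureTheory.FiniteMeasure

variable {α β : Type*} [MeasurableSpace α] [MeasurableSpace β]

lemma nonempty_of_ne_zero {μ : FiniteMeasure α} (h : μ ≠ 0) : Nonempty α := by
  by_contra hα
  rw [not_nonempty_iff] at hα
  exact h (Subtype.ext (Measure.eq_zero_of_isEmpty _))

lemma smul_prod_smul (a b : ℝ≥0) (μ : FiniteMeasure α) (ν : FiniteMeasure β) :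
    (a • μ).prod (b • ν) = (a * b) • μ.prod ν := by
  apply Subtype.ext
  simp only [val_eq_toMeasure, toMeasure_prod, toMeasure_smul, Measure.prod_smul_left,
    Measure.prod_smul_right, smul_smul, mul_comm]

variable [TopologicalSpace α] [SecondCountableTopology α]
  [TopologicalSpace.PseudoMetrizableSpace α] [OpensMeasurableSpace α]
  [TopologicalSpace β] [SecondCountableTopology β]
  [TopologicalSpace.PseudoMetrizableSpace β] [OpensMeasurableSpace β]

theorem tendsto_prod {γ : Type*} {l : Filter γ} {μs : γ → FiniteMeasure α}
    {νs : γ → FiniteMeasure β} {μ : FiniteMeasure α} {ν : FiniteMeasure β}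
    (hμ : Tendsto μs l (𝓝 μ)) (hν : Tendsto νs l (𝓝 ν)) :
    Tendsto (fun i => (μs i).prod (νs i)) l (𝓝 (μ.prod ν)) := by
  by_cases h0 : μ = 0 ∨ ν = 0
  · have hmass : Tendsto (fun i => ((μs i).prod (νs i)).mass) l (𝓝 (μ.mass * ν.mass)) := by
      simpa only [mass_prod] using hμ.mass.mul hν.mass
    rcases h0 with rfl | rfl <;>
      simpa using tendsto_zero_of_tendsto_zero_mass (by simpa using hmass)
  push Not at h0
  have := nonempty_of_ne_zero h0.1
  have := nonempty_of_ne_zero h0.2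
  have prod_eq_mass_smul : ∀ (ξ : FiniteMeasure α) (η : FiniteMeasure β), ξ.prod η =
      (ξ.mass * η.mass) • (ξ.normalize.prod η.normalize).toFiniteMeasure := by
    intro ξ η
    conv_lhs => rw [ξ.self_eq_mass_smul_normalize, η.self_eq_mass_smul_normalize]
    rw [smul_prod_smul]
    rfl
  simp only [prod_eq_mass_smul]
  exact (hμ.mass.mul hν.mass).smul <|
    ProbabilityMeasure.toFiniteMeasure_continuous.continuousAt.tendsto.comp <|
    ProbabilityMeasure.continuous_prod.continuousAt.tendsto.comp <|
    (tendsto_normalize_of_tendsto hμ h0.1).prodMk_nhds (tendsto_normalize_of_tendsto hν h0.2)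

end MeasureTheory.FiniteMeasure

lemma countable_setOf_measure_singleton_ne_zero {α : Type*} [MeasurableSpace α]
    [MeasurableSingletonClass α] (μ : Measure α) [SFinite μ] :
    {x : α | μ {x} ≠ 0}.Countable := by
  simpa [pos_iff_ne_zero] using Measure.countable_meas_pos_of_disjoint_iUnion
    (μ := μ) measurableSet_singleton fun x y hxy => Set.disjoint_singleton.mpr hxy

lemma exists_finset_mesh_Icc (a b : ℝ) {η : ℝ} (hη : 0 < η) :
    ∃ T : Finset ℝ, ↑T ⊆ Set.Icc a b ∧
      ∀ x ∈ Set.Icc a b, ∃ s ∈ T, ∃ t ∈ T, s ≤ x ∧ x ≤ t ∧ t - s < η := by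
  rcases lt_or_ge b a with hba | hab
  · exact ⟨∅, by simp, fun x hx => absurd (hx.1.trans hx.2) (not_le.mpr hba)⟩
  obtain ⟨h, hh, hhη⟩ : ∃ h, 0 < h ∧ h < η := ⟨η / 2, by positivity, by linarith⟩
  let node : ℕ → ℝ := fun i => min b (a + i * h)
  refine ⟨(Finset.range (⌈(b - a) / h⌉₊ + 2)).image node, ?_, fun x hx => ?_⟩
  · simp only [Finset.coe_image, Set.image_subset_iff]
    intro i _
    exact ⟨le_min hab (by simp only [le_add_iff_nonneg_right]; positivity), min_le_left _ _⟩
  set i := ⌊(x - a) / h⌋₊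
  have hi_le : i * h ≤ x - a :=
    (le_div_iff₀ hh).mp (Nat.floor_le (div_nonneg (by linarith [hx.1]) hh.le))
  have hi_lt : x - a < (i + 1) * h := (div_lt_iff₀ hh).mp (Nat.lt_floor_add_one _)
  have hiN : i ≤ ⌈(b - a) / h⌉₊ :=
    (Nat.floor_le_floor (by gcongr; exact hx.2)).trans (Nat.floor_le_ceil _)
  have hs : node i = a + i * h := min_eq_right (by linarith [hx.2])
  refine ⟨node i, Finset.mem_image_of_mem _ (Finset.mem_range.mpr (by omega)),
    node (i + 1), Finset.mem_image_of_mem _ (Finset.mem_range.mpr (by omega)), ?_, ?_, ?_⟩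
  · rw [hs]; linarith
  · exact le_min hx.2 (by push_cast; linarith)
  · have : node (i + 1) ≤ a + (i + 1) * h := by simp only [node]; push_cast; exact min_le_right _ _
    rw [hs]; linarith

theorem tendstoUniformlyOn_Icc_of_monotoneOn {ι : Type*} {l : Filter ι} {f : ι → ℝ → ℝ}
    {g : ℝ → ℝ} {a b : ℝ} (hf : ∀ i, MonotoneOn (f i) (Set.Icc a b))
    (hg : ContinuousOn g (Set.Icc a b))
    (hlim : ∀ x ∈ Set.Icc a b, Tendsto (fun i => f i x) l (𝓝 (g x))) :
    TendstoUniformlyOn f g l (Set.Icc a b) := by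
  rw [Metric.tendstoUniformlyOn_iff]
  intro δ hδ
  obtain ⟨η, hη, hgη⟩ := Metric.uniformContinuousOn_iff.mp
    (isCompact_Icc.uniformContinuousOn_of_continuous hg) (δ / 2) (by positivity)
  obtain ⟨T, hTsub, hT⟩ := exists_finset_mesh_Icc a b hη
  have hnodes : ∀ᶠ i in l, ∀ t ∈ T, dist (f i t) (g t) < δ / 2 :=
    (Filter.eventually_all_finset T).mpr fun t ht =>
      Metric.tendsto_nhds.mp (hlim t (hTsub ht)) _ (by positivity)
  filter_upwards [hnodes] with i hi x hx
  obtain ⟨s, hs, t, ht, hsx, hxt, hts⟩ := hT x hx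
  have hgs := hgη s (hTsub hs) x hx (by rw [Real.dist_eq, abs_sub_lt_iff]; constructor <;> linarith)
  have hgt := hgη t (hTsub ht) x hx (by rw [Real.dist_eq, abs_sub_lt_iff]; constructor <;> linarith)
  have hfs := hi s hs
  have hft := hi t ht
  have hfsx := hf i (hTsub hs) hx hsx
  have hfxt := hf i hx (hTsub ht) hxt
  rw [Real.dist_eq, abs_sub_lt_iff] at hgs hgt hfs hft ⊢
  constructor <;> linarith

lemma TendstoUniformlyOn.tendsto_iSup_abs_sub {α ι : Type*} {l : Filter ι} {F : ι → α → ℝ}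
    {f : α → ℝ} {s : Set α} (h : TendstoUniformlyOn F f l s) :
    Tendsto (fun i => ⨆ x : s, |F i x - f x|) l (𝓝 0) := by
  refine Metric.tendsto_nhds.mpr fun δ hδ => ?_
  filter_upwards [Metric.tendstoUniformlyOn_iff.mp h (δ / 2) (by positivity)] with i hi
  have hsup : ⨆ x : s, |F i x - f x| ≤ δ / 2 :=
    Real.iSup_le (fun x => by rw [abs_sub_comm]; exact (hi x x.2).le) (by positivity)
  rw [Real.dist_0_eq_abs, abs_of_nonneg (Real.iSup_nonneg fun _ => abs_nonneg _)]
  linarith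

lemma WeakTendsto.tendsto_finiteMeasure {μs : ℕ → Measure ℝ} {μ : Measure ℝ}
    [∀ n, IsFiniteMeasure (μs n)] [IsFiniteMeasure μ] (h : WeakTendsto μs μ) :
    Tendsto (β := FiniteMeasure ℝ) (fun n => ⟨μs n, inferInstance⟩) atTop
      (𝓝 ⟨μ, inferInstance⟩) := by
  refine FiniteMeasure.tendsto_iff_forall_integral_tendsto.mpr fun f => ?_
  exact h f f.continuous ⟨‖f‖, fun x => f.norm_coe_le_norm x⟩

lemma norm_triangle_le_one {ε : ℝ} (hε : 0 ≤ ε) (p : ℝ × ℝ) :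
    ‖max (1 - |p.1 - p.2| / ε) 0‖ ≤ 1 := by
  rw [Real.norm_of_nonneg (le_max_right _ _)]
  exact max_le (sub_le_self _ (by positivity)) zero_le_one

noncomputable def triangleKernel {ε : ℝ} (hε : 0 ≤ ε) : ℝ × ℝ →ᵇ ℝ :=
  .ofNormedAddCommGroup (fun p => max (1 - |p.1 - p.2| / ε) 0) (by fun_prop) 1
    (norm_triangle_le_one hε)

lemma triangleKernel_apply {ε : ℝ} (hε : 0 ≤ ε) (p : ℝ × ℝ) :
    triangleKernel hε p = max (1 - |p.1 - p.2| / ε) 0 := rfl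

lemma Ieps_eq_integral_triangleKernel {ε : ℝ} (hε : 0 ≤ ε) (μ : Measure ℝ) :
    Ieps ε μ = ∫ p, triangleKernel hε p ∂(μ.prod μ) := rfl

lemma tendsto_Ieps_of_weakTendsto {μs : ℕ → Measure ℝ} {μ : Measure ℝ}
    [∀ n, IsFiniteMeasure (μs n)] [IsFiniteMeasure μ] (h : WeakTendsto μs μ)
    {ε : ℝ} (hε : 0 ≤ ε) :
    Tendsto (fun n => Ieps ε (μs n)) atTop (𝓝 (Ieps ε μ)) :=
  FiniteMeasure.tendsto_iff_forall_integral_tendsto.mp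
    (FiniteMeasure.tendsto_prod h.tendsto_finiteMeasure h.tendsto_finiteMeasure)
    (triangleKernel hε)

lemma Ieps_mono (μ : Measure ℝ) [IsFiniteMeasure μ] {ε ε' : ℝ} (hε : 0 < ε) (hεε' : ε ≤ ε') :
    Ieps ε μ ≤ Ieps ε' μ := by
  rw [Ieps_eq_integral_triangleKernel hε.le, Ieps_eq_integral_triangleKernel (hε.trans_le hεε').le]
  refine integral_mono (BoundedContinuousFunction.integrable _ _)
    (BoundedContinuousFunction.integrable _ _) fun p => ?_
  simp only [triangleKernel_apply]
  gcongr

lemma measureReal_diagonal_le_Ieps (μ : Measure ℝ) [IsFiniteMeasure μ] {ε : ℝ} (hε : 0 ≤ ε) :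
    (μ.prod μ).real (Set.diagonal ℝ) ≤ Ieps ε μ := by
  rw [← integral_indicator_one isClosed_diagonal.measurableSet,
    Ieps_eq_integral_triangleKernel hε]
  refine integral_mono ((integrable_const 1).indicator isClosed_diagonal.measurableSet)
    (BoundedContinuousFunction.integrable _ _) fun p => ?_
  by_cases hp : p ∈ Set.diagonal ℝ
  · simp [triangleKernel_apply, Set.mem_diagonal_iff.mp hp]
  · simp [Set.indicator_of_notMem hp, triangleKernel_apply]

lemma tendsto_triangleKernel_nhdsGT_zero (p : ℝ × ℝ) :
    Tendsto (fun ε => max (1 - |p.1 - p.2| / ε) 0) (𝓝[>] 0)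
      (𝓝 ((Set.diagonal ℝ).indicator 1 p)) := by
  by_cases hp : p.1 = p.2
  · simp [hp]
  · have hr : 0 < |p.1 - p.2| := abs_pos.mpr (sub_ne_zero.mpr hp)
    rw [Set.indicator_of_notMem (show p ∉ Set.diagonal ℝ from hp)]
    refine tendsto_const_nhds.congr' ?_
    filter_upwards [Ioo_mem_nhdsGT hr] with ε hε
    have : 1 ≤ |p.1 - p.2| / ε := (one_le_div hε.1).mpr hε.2.le
    exact (max_eq_right (by linarith)).symm

lemma tendsto_Ieps_nhdsGT_zero (μ : Measure ℝ) [IsFiniteMeasure μ] :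
    Tendsto (fun ε => Ieps ε μ) (𝓝[>] 0) (𝓝 ((μ.prod μ).real (Set.diagonal ℝ))) := by
  rw [← integral_indicator_one isClosed_diagonal.measurableSet]
  refine tendsto_integral_filter_of_dominated_convergence (fun _ => 1)
    (Eventually.of_forall fun ε => (by fun_prop : Continuous _).aestronglyMeasurable) ?_
    (integrable_const 1) (Eventually.of_forall tendsto_triangleKernel_nhdsGT_zero)
  filter_upwards [self_mem_nhdsWithin] with ε (hε : 0 < ε)
  exact Eventually.of_forall (norm_triangle_le_one hε.le)

lemma continuousOn_Ieps (μ : Measure ℝ) [IsFiniteMeasure μ] :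
    ContinuousOn (fun ε => Ieps ε μ) (Set.Ioi 0) := by
  refine continuousOn_of_dominated (bound := fun _ => 1)
    (fun ε _ => (by fun_prop : Continuous _).aestronglyMeasurable) ?_ (integrable_const 1)
    (Eventually.of_forall fun p => ?_)
  · exact fun ε (hε : 0 < ε) => Eventually.of_forall (norm_triangle_le_one hε.le)
  · exact ContinuousOn.sup (continuousOn_const.sub (continuousOn_const.div continuousOn_id
      fun ε hε => ne_of_gt hε)) continuousOn_const

lemma prod_diagonal_eq_starMeasure_univ (μ : Measure ℝ) [SFinite μ] :
    μ.prod μ (Set.diagonal ℝ) = starMeasure μ Set.univ := by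
  have hatoms := countable_setOf_measure_singleton_ne_zero μ
  calc μ.prod μ (Set.diagonal ℝ) = ∫⁻ x, μ {x} ∂μ := by
        rw [Measure.prod_apply isClosed_diagonal.measurableSet]
        congr! with x
        ext y
        simp [eq_comm]
    _ = ∫⁻ x in {x | μ {x} ≠ 0}, μ {x} ∂μ := (setLIntegral_eq_of_support_subset subset_rfl).symm
    _ = ∑' x : {x | μ {x} ≠ 0}, μ {(x : ℝ)} ^ 2 := by
        simp only [lintegral_countable _ hatoms, sq]
    _ = ∑' x, μ {x} ^ 2 :=
        tsum_subtype_eq_of_support_subset (f := fun x => μ {x} ^ 2) fun x hx => by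
          simpa using hx
    _ = starMeasure μ Set.univ := by
        simp [starMeasure, Measure.sum_apply _ MeasurableSet.univ]

lemma toReal_starMeasure_univ_eq_measureReal_diagonal (μ : Measure ℝ) [SFinite μ] :
    (starMeasure μ Set.univ).toReal = (μ.prod μ).real (Set.diagonal ℝ) := by
  rw [measureReal_def, prod_diagonal_eq_starMeasure_univ]

noncomputable def extendedIeps (μ : Measure ℝ) (ε : ℝ) : ℝ :=
  if ε = 0 then (starMeasure μ Set.univ).toReal else Ieps ε μ

section extendedIeps

variable (μ : Measure ℝ) [IsFiniteMeasure μ]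

lemma monotoneOn_extendedIeps : MonotoneOn (extendedIeps μ) (Set.Ici 0) := by
  intro ε (hε : 0 ≤ ε) ε' (hε' : 0 ≤ ε') hεε'
  unfold extendedIeps
  split_ifs with h h' h'
  · exact le_rfl
  · rw [toReal_starMeasure_univ_eq_measureReal_diagonal μ]
    exact measureReal_diagonal_le_Ieps μ hε'
  · exact absurd (le_antisymm (h' ▸ hεε') hε) h
  · exact Ieps_mono μ (lt_of_le_of_ne hε (Ne.symm h)) hεε'

lemma continuousOn_extendedIeps : ContinuousOn (extendedIeps μ) (Set.Ici 0) := by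
  intro ε (hε : 0 ≤ ε)
  have heq : ∀ ε' ∈ Set.Ioi (0 : ℝ), extendedIeps μ ε' = Ieps ε' μ := fun ε' hε' =>
    if_neg (ne_of_gt hε')
  rcases hε.eq_or_lt with rfl | hpos
  · refine continuousWithinAt_Ioi_iff_Ici.mp ?_
    have hlim := tendsto_Ieps_nhdsGT_zero μ
    rw [← toReal_starMeasure_univ_eq_measureReal_diagonal μ] at hlim
    exact (hlim.congr' (eventuallyEq_nhdsWithin_of_eqOn heq).symm).trans_eq (by simp [extendedIeps])
  · refine ((continuousOn_Ieps μ).continuousAt (Ioi_mem_nhds hpos)).congr ?_ |>.continuousWithinAt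
    filter_upwards [Ioi_mem_nhds hpos] with ε' hε'
    exact (heq ε' hε').symm

end extendedIeps

theorem tendstoUniformlyOn_Ieps_of_weakTendsto {μs : ℕ → Measure ℝ} {μ : Measure ℝ}
    [∀ n, IsFiniteMeasure (μs n)] [IsFiniteMeasure μ] (hweak : WeakTendsto μs μ)
    (hstar : Tendsto (fun n => (starMeasure (μs n) Set.univ).toReal) atTop
      (𝓝 (starMeasure μ Set.univ).toReal)) (a : ℝ) :
    TendstoUniformlyOn (fun n ε => Ieps ε (μs n)) (fun ε => Ieps ε μ) atTop (Set.Ioc 0 a) := by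
  have hext : TendstoUniformlyOn (fun n => extendedIeps (μs n)) (extendedIeps μ) atTop
      (Set.Icc 0 a) := by
    refine tendstoUniformlyOn_Icc_of_monotoneOn
      (fun n => (monotoneOn_extendedIeps (μs n)).mono Set.Icc_subset_Ici_self)
      ((continuousOn_extendedIeps μ).mono Set.Icc_subset_Ici_self) fun ε hε => ?_
    unfold extendedIeps
    split_ifs
    · exact hstar
    · exact tendsto_Ieps_of_weakTendsto hweak hε.1
  have heq : ∀ ν : Measure ℝ, Set.EqOn (extendedIeps ν) (fun ε => Ieps ε ν) (Set.Ioc 0 a) :=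
    fun ν ε hε => if_neg (ne_of_gt hε.1)
  exact (hext.mono Set.Ioc_subset_Icc_self).congr (Eventually.of_forall fun n => heq (μs n))
    |>.congr_right (heq μ)

/-- Ethier–Kurtz: if `Z : [0,∞) → M(ℝ)` is weakly continuous and
`t ↦ Z(t)*(ℝ)` is continuous, then `Z` is continuous in the weak atomic
topology: along every sequence `tₙ → t₀` one has `Z(tₙ) → Z(t₀)` weakly
and `sup_{0<ε≤1} |I_ε(Z(tₙ)) − I_ε(Z(t₀))| → 0`. -/
theorem weakAtomic_continuous_of_weak_continuous_of_star_mass_continuous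
    (Z : ℝ≥0 → Measure ℝ) (hfin : ∀ t, IsFiniteMeasure (Z t))
    (hweakcont : ∀ f : ℝ → ℝ, Continuous f → (∃ C, ∀ x, |f x| ≤ C) →
      Continuous (fun t => ∫ x, f x ∂(Z t)))
    (hstarcont : Continuous (fun t => (starMeasure (Z t) Set.univ).toReal)) :
    ∀ (t₀ : ℝ≥0) (ts : ℕ → ℝ≥0), Tendsto ts atTop (𝓝 t₀) →
      WeakTendsto (fun n => Z (ts n)) (Z t₀) ∧
        Tendsto
          (fun n => ⨆ ε : Set.Ioc (0 : ℝ) 1, |Ieps ε (Z (ts n)) - Ieps ε (Z t₀)|)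
          atTop (𝓝 0) := by
  intro t₀ ts hts
  have hweak : WeakTendsto (fun n => Z (ts n)) (Z t₀) := fun f hf hbdd =>
    ((hweakcont f hf hbdd).tendsto t₀).comp hts
  exact ⟨hweak, (tendstoUniformlyOn_Ieps_of_weakTendsto hweak
    ((hstarcont.tendsto t₀).comp hts) 1).tendsto_iSup_abs_sub⟩
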